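/- For every n ≥ 1, the permutohedron Π_{n−1} equals the set of all x ∈ ℝ^n such that ∑_{i=1}^{n} x_i = n(n+1)/2 and, for every nonempty proper subset S ⊆ {1,…,n} with |S| = k, ∑_{i∈S} x_i ≥ k(k+1)/2. That is, Π_{n−1} is the intersection of the affine hyperplane 𝔸^{n−1} with the 2^n − 2 half-spaces H_S. -/

import Mathlib

/-!
Each vertex `v_σ` satisfies the inequalities, since `k` distinct positive integers sum to at
least `1 + ⋯ + k`, and the half-space description is convex; this gives `Π_{n-1} ⊆ 𝔸^{n-1} ∩ ⋂ H_S`.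

Conversely, if `x` satisfies the inequalities but lies outside the (compact) hull, some linear
functional `y ↦ ∑ cᵢ yᵢ` separates them. Let `τ` order the coordinates of `c` increasingly. The
prefix sums of `x ∘ τ` dominate those of `1, 2, …, n` and have the same total, so Abel summation
against the increasing weights `c ∘ τ` gives `∑ cᵢ xᵢ ≤ ∑ cᵢ (v_τ)ᵢ`, contradicting the separation.
-/

open Finset

noncomputable def permuVertex (n : ℕ) (σ : Equiv.Perm (Fin n)) : Fin n → ℝ :=
  fun i => ((σ⁻¹ i : ℕ) : ℝ) + 1

noncomputable def permutohedron (n : ℕ) : Set (Fin n → ℝ) :=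
  convexHull ℝ (Set.range (permuVertex n))

theorem sum_range_cast_add_one (k : ℕ) : ∑ j ∈ range k, ((j : ℝ) + 1) = k * (k + 1) / 2 := by
  induction k with
  | zero => simp
  | succ k ih => rw [sum_range_succ, ih]; push_cast; ring

theorem sum_fin_val_add_one (k : ℕ) : ∑ j : Fin k, ((j : ℝ) + 1) = k * (k + 1) / 2 :=
  (Fin.sum_univ_eq_sum_range (fun j => (j : ℝ) + 1) k).trans (sum_range_cast_add_one k)

theorem permuVertex_apply_apply (n : ℕ) (σ : Equiv.Perm (Fin n)) (j : Fin n) :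
    permuVertex n σ (σ j) = (j : ℝ) + 1 := by
  simp [permuVertex]

theorem sum_mul_le_mul_sum_of_prefix_sums_nonneg {n : ℕ} {a : Fin n → ℝ} (ha : Monotone a)
    {t : ℝ} (ht : ∀ j, a j ≤ t) {d : Fin n → ℝ}
    (hd : ∀ m (hm : m ≤ n), 0 ≤ ∑ j : Fin m, d (Fin.castLE hm j)) :
    ∑ j, a j * d j ≤ t * ∑ j, d j := by
  induction n generalizing t with
  | zero => simp
  | succ n ih =>
    have hinit := ih (d := fun j => d j.castSucc) (t := a (Fin.last n))
      (ha.comp Fin.strictMono_castSucc.monotone) (fun j => ha (Fin.le_last _))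
      (fun m hm => hd m (hm.trans n.le_succ))
    have htotal : 0 ≤ ∑ j, d j := by simpa using hd (n + 1) le_rfl
    rw [Fin.sum_univ_castSucc, Fin.sum_univ_castSucc (f := d)]
    calc _ ≤ a (Fin.last n) * (∑ j : Fin n, d j.castSucc + d (Fin.last n)) := by
          rw [mul_add]; exact add_le_add_left hinit _
      _ ≤ t * (∑ j : Fin n, d j.castSucc + d (Fin.last n)) := by
          rw [← Fin.sum_univ_castSucc (f := d)]
          exact mul_le_mul_of_nonneg_right (ht _) htotal

def permutohedronHRep (n : ℕ) : Set (Fin n → ℝ) :=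
  {x | ∑ i, x i = n * (n + 1) / 2 ∧ ∀ S : Finset (Fin n), (#S : ℝ) * (#S + 1) / 2 ≤ ∑ i ∈ S, x i}

theorem permutohedronHRep_eq (n : ℕ) :
    permutohedronHRep n =
      {x : Fin n → ℝ |
        (∑ i, x i = ((n : ℝ) * ((n : ℝ) + 1)) / 2) ∧
        ∀ S : Finset (Fin n), S.Nonempty → S ≠ Finset.univ →
          ((S.card : ℝ) * ((S.card : ℝ) + 1)) / 2 ≤ ∑ i ∈ S, x i} := by
  ext x
  refine ⟨fun ⟨htotal, hS⟩ => ⟨htotal, fun S _ _ => hS S⟩,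
    fun ⟨htotal, hS⟩ => ⟨htotal, fun S => ?_⟩⟩
  rcases S.eq_empty_or_nonempty with rfl | hne
  · simp
  by_cases huniv : S = univ
  · simp [huniv, htotal]
  exact hS S hne huniv

theorem convex_permutohedronHRep (n : ℕ) : Convex ℝ (permutohedronHRep n) := by
  have hlin (S : Finset (Fin n)) : IsLinearMap ℝ fun x : Fin n → ℝ => ∑ i ∈ S, x i :=
    ⟨fun x y => sum_add_distrib, fun c x => (mul_sum S x c).symm⟩
  have hinter : permutohedronHRep n = {x : Fin n → ℝ | ∑ i, x i = n * (n + 1) / 2} ∩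
      ⋂ S : Finset (Fin n), {x | (#S : ℝ) * (#S + 1) / 2 ≤ ∑ i ∈ S, x i} := by
    ext x; simp [permutohedronHRep]
  rw [hinter]
  exact (convex_hyperplane (hlin univ) _).inter
    (convex_iInter fun S => convex_halfSpace_ge (hlin S) _)

theorem permuVertex_mem_permutohedronHRep (n : ℕ) (σ : Equiv.Perm (Fin n)) :
    permuVertex n σ ∈ permutohedronHRep n := by
  refine ⟨?_, fun S => ?_⟩
  · rw [← sum_fin_val_add_one, ← Equiv.sum_comp σ]
    simp [permuVertex_apply_apply]
  · have hinj : Set.InjOn (fun i => ((σ⁻¹ i : ℕ) : ℤ) + 1) S := fun i _ j _ hij => by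
      simpa [Fin.val_inj] using hij
    have hdistinct := sum_range_le_sum (s := S.image fun i => ((σ⁻¹ i : ℕ) : ℤ) + 1) (c := 1)
      fun t ht => by obtain ⟨i, -, rfl⟩ := mem_image.1 ht; omega
    rw [card_image_of_injOn hinj, sum_image hinj] at hdistinct
    have hdistinct_real := Int.cast_le (R := ℝ).2 hdistinct
    push_cast at hdistinct_real
    rw [← sum_range_cast_add_one]
    simp only [add_comm (1 : ℝ)] at hdistinct_real
    exact hdistinct_real

theorem sum_mul_le_sum_mul_permuVertex_sort {n : ℕ} {x : Fin n → ℝ}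
    (hx : x ∈ permutohedronHRep n) (c : Fin n → ℝ) :
    ∑ i, c i * x i ≤ ∑ i, c i * permuVertex n (Tuple.sort c) i := by
  set τ := Tuple.sort c
  have hprefix (m : ℕ) (hm : m ≤ n) :
      0 ≤ ∑ j : Fin m, (x (τ (Fin.castLE hm j)) - ((Fin.castLE hm j : ℕ) + 1)) := by
    have hS := hx.2 (univ.map ((Fin.castLEEmb hm).trans τ.toEmbedding))
    simp only [card_map, card_univ, Fintype.card_fin, sum_map] at hS
    rw [sum_sub_distrib]
    simp only [Fin.val_castLE, sum_fin_val_add_one]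
    simpa using hS
  have htotal : ∑ j, (x (τ j) - ((j : ℕ) + 1)) = 0 := by
    rw [sum_sub_distrib, Equiv.sum_comp τ x, hx.1, sum_fin_val_add_one, sub_self]
  obtain ⟨t, ht⟩ := (Set.finite_range (c ∘ τ)).bddAbove
  have habel := sum_mul_le_mul_sum_of_prefix_sums_nonneg (Tuple.monotone_sort c)
    (fun j => ht ⟨j, rfl⟩) (d := fun j => x (τ j) - ((j : ℕ) + 1)) hprefix
  rw [htotal, mul_zero] at habel
  simp only [Function.comp_apply, mul_sub, sum_sub_distrib, sub_nonpos] at habel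
  rw [← Equiv.sum_comp τ, ← Equiv.sum_comp τ (fun i => c i * permuVertex n τ i)]
  simpa only [permuVertex_apply_apply] using habel

theorem permutohedron_subset_permutohedronHRep (n : ℕ) :
    permutohedron n ⊆ permutohedronHRep n :=
  convexHull_min (Set.range_subset_iff.2 (permuVertex_mem_permutohedronHRep n))
    (convex_permutohedronHRep n)

theorem permutohedronHRep_subset_permutohedron (n : ℕ) :
    permutohedronHRep n ⊆ permutohedron n := by
  intro x hx
  by_contra hout
  have hclosed : IsClosed (permutohedron n) :=
    ((Set.finite_range (permuVertex n)).isCompact_convexHull (𝕜 := ℝ)).isClosed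
  obtain ⟨f, u, hfu, hux⟩ :=
    geometric_hahn_banach_closed_point (convex_convexHull ℝ _) hclosed hout
  set c : Fin n → ℝ := fun i => f (Pi.single i 1)
  have hf (y : Fin n → ℝ) : f y = ∑ i, c i * y i := by
    conv_lhs => rw [pi_eq_sum_univ' y]
    simp [c, mul_comm]
  have hvertex := hfu (permuVertex n (Tuple.sort c)) (subset_convexHull ℝ _ ⟨_, rfl⟩)
  have hgreedy := sum_mul_le_sum_mul_permuVertex_sort hx c
  rw [← hf, ← hf] at hgreedy
  linarith

theorem statement1 (n : ℕ) :
    permutohedron n =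
      {x : Fin n → ℝ |
        (∑ i, x i = ((n : ℝ) * ((n : ℝ) + 1)) / 2) ∧
        ∀ S : Finset (Fin n), S.Nonempty → S ≠ Finset.univ →
          ((S.card : ℝ) * ((S.card : ℝ) + 1)) / 2 ≤ ∑ i ∈ S, x i} := by
  rw [← permutohedronHRep_eq]
  exact (permutohedron_subset_permutohedronHRep n).antisymm
    (permutohedronHRep_subset_permutohedron n)
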